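/- Let κ : ℝ → ℝ and T > 0. Suppose that for every piecewise-constant round-trip trading rate x : [0,T] → ℝ (finitely many constant pieces, with ∫₀ᵀ x(t) dt = 0), the induced holdings π(t) = −∫₀ᵗ x(u) du satisfy ∫₀ᵀ π(t)·κ(x(t)) dt ≤ 0. Then κ is linear: κ(α) = α·κ(1) for every α ∈ ℝ; in particular κ is odd and κ(0) = 0. -/

import Mathlib

/-- A trading rate `x` is piecewise constant on `[0, T]` if there is a finite
partition `0 = t₀ < t₁ < ⋯ < tₙ = T` such that `x` is constant on each piece
`(tᵢ, tᵢ₊₁]`. -/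
def PiecewiseConstantOn (x : ℝ → ℝ) (T : ℝ) : Prop :=
  ∃ (n : ℕ) (t : Fin (n + 1) → ℝ) (c : Fin n → ℝ),
    StrictMono t ∧ t 0 = 0 ∧ t (Fin.last n) = T ∧
      ∀ i : Fin n, ∀ s ∈ Set.Ioc (t i.castSucc) (t i.succ), x s = c i

open MeasureTheory intervalIntegral Set

lemma int_const_piece {f : ℝ → ℝ} {c p q : ℝ} (hpq : p ≤ q)
    (h : ∀ t ∈ Set.Ioc p q, f t = c) : ∫ t in p..q, f t = c * (q - p) := by
  have : ∫ t in p..q, f t = ∫ t in p..q, (fun _ : ℝ => c) t := by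
    apply intervalIntegral.integral_congr_ae
    filter_upwards with t ht
    exact h t (by rwa [Set.uIoc_of_le hpq] at ht)
  rw [this, intervalIntegral.integral_const, smul_eq_mul, mul_comm]

lemma int_linear_piece {f : ℝ → ℝ} {c₁ c₀ p q : ℝ} (hpq : p ≤ q)
    (h : ∀ t ∈ Set.Ioc p q, f t = c₁ * t + c₀) :
    ∫ t in p..q, f t = c₁ * (q^2 - p^2)/2 + c₀ * (q - p) := by
  have : ∫ t in p..q, f t = ∫ t in p..q, (c₁ * t + c₀) := by
    apply intervalIntegral.integral_congr_ae
    filter_upwards with t ht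
    exact h t (by rwa [Set.uIoc_of_le hpq] at ht)
  rw [this, intervalIntegral.integral_add ((intervalIntegrable_id).const_mul c₁)
      intervalIntegrable_const, intervalIntegral.integral_const_mul, integral_id,
      intervalIntegral.integral_const, smul_eq_mul]
  ring

lemma step_ii {g : ℝ → ℝ} (hg : ∀ p q, IntervalIntegrable g volume p q) (s a : ℝ) (p q : ℝ) :
    IntervalIntegrable (fun t => if t ≤ s then a else g t) volume p q := by
  rw [intervalIntegrable_iff]
  have he : (fun t => if t ≤ s then a else g t) = (Set.Iic s).piecewise (fun _ => a) g := by
    ext t; by_cases h : t ≤ s <;> simp [Set.piecewise, h]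
  rw [he]
  apply MeasureTheory.Integrable.piecewise measurableSet_Iic
  · refine (integrableOn_const (hs := ne_of_lt ?_))
    rw [MeasureTheory.Measure.restrict_apply measurableSet_Iic]
    calc volume (Set.Iic s ∩ Set.uIoc p q) ≤ volume (Set.uIoc p q) :=
          measure_mono Set.inter_subset_right
      _ < ⊤ := measure_Ioc_lt_top
  · exact ((intervalIntegrable_iff.1 (hg p q))).integrableOn
set_option maxHeartbeats 1000000 in
lemma master (κ : ℝ → ℝ) (T : ℝ)
    (hNA : ∀ x : ℝ → ℝ, PiecewiseConstantOn x T →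
      (∫ t in (0 : ℝ)..T, x t) = 0 →
      (∫ t in (0 : ℝ)..T, (-∫ u in (0 : ℝ)..t, x u) * κ (x t)) ≤ 0)
    (a m b s r : ℝ) (hs : 0 < s) (hsr : s < r) (hrT : r < T)
    (hzero : s * a + (r - s) * m + (T - r) * b = 0) :
    0 ≤ a * κ a * s^2/2 + κ m * (a*s*(r-s) + m*(r-s)^2/2)
      + κ b * ((a*s + m*(r-s))*(T-r) + b*(T-r)^2/2) := by
  have hs' : (0:ℝ) ≤ s := le_of_lt hs
  have hsr' : s ≤ r := le_of_lt hsr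
  have hrT' : r ≤ T := le_of_lt hrT
  set x : ℝ → ℝ := fun t => if t ≤ s then a else if t ≤ r then m else b with hxdef
  -- values
  have hA : ∀ t : ℝ, t ≤ s → x t = a := fun t ht => by simp [hxdef, ht]
  have hM : ∀ t : ℝ, s < t → t ≤ r → x t = m := fun t ht1 ht2 => by
    simp [hxdef, not_le.2 ht1, ht2]
  have hB : ∀ t : ℝ, r < t → x t = b := fun t ht => by
    simp [hxdef, not_le.2 (lt_of_le_of_lt hsr' ht), not_le.2 ht]
  -- integrability of x on every interval
  have hxii : ∀ p q : ℝ, IntervalIntegrable x volume p q := by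
    intro p q
    have h2 : ∀ p q : ℝ, IntervalIntegrable (fun t => if t ≤ r then m else b) volume p q :=
      step_ii (fun p q => intervalIntegrable_const) r m
    exact step_ii h2 s a p q
  -- primitive values
  have hI1 : ∀ t : ℝ, 0 ≤ t → t ≤ s → (∫ u in (0:ℝ)..t, x u) = a * t := by
    intro t h0 h1
    have := int_const_piece (f := x) (c := a) (p := 0) (q := t) h0
      (fun u hu => hA u (le_trans hu.2 h1))
    simpa using this
  have hI2 : ∀ t : ℝ, s < t → t ≤ r → (∫ u in (0:ℝ)..t, x u) = a * s + m * (t - s) := by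
    intro t h1 h2
    rw [← intervalIntegral.integral_add_adjacent_intervals (hxii 0 s) (hxii s t)]
    rw [int_const_piece (f := x) (c := a) hs' (fun u hu => hA u hu.2),
        int_const_piece (f := x) (c := m) (le_of_lt h1)
          (fun u hu => hM u hu.1 (le_trans hu.2 h2))]
    ring
  have hI3 : ∀ t : ℝ, r < t → (∫ u in (0:ℝ)..t, x u) = a * s + m * (r - s) + b * (t - r) := by
    intro t h1
    rw [← intervalIntegral.integral_add_adjacent_intervals (hxii 0 r) (hxii r t)]
    rw [hI2 r hsr le_rfl, int_const_piece (f := x) (c := b) (le_of_lt h1)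
          (fun u hu => hB u hu.1)]
  -- round trip
  have hrt : (∫ t in (0:ℝ)..T, x t) = 0 := by
    rw [hI3 T hrT]; linarith [hzero]
  -- piecewise constant
  have hpc : PiecewiseConstantOn x T := by
    refine ⟨3, ![0, s, r, T], ![a, m, b], ?_, rfl, rfl, ?_⟩
    · intro i j hij
      fin_cases i <;> fin_cases j <;> simp_all <;> linarith
    · intro i u hu
      fin_cases i
      · exact (hA u hu.2).trans (by simp)
      · exact (hM u hu.1 hu.2).trans (by simp)
      · exact (hB u hu.1).trans (by simp)
  -- the gain integrand
  set F : ℝ → ℝ := fun t => (-∫ u in (0:ℝ)..t, x u) * κ (x t) with hFdef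
  have hκx : (fun t => κ (x t)) = fun t => if t ≤ s then κ a else if t ≤ r then κ m else κ b := by
    funext t; by_cases h1 : t ≤ s <;> by_cases h2 : t ≤ r <;> simp [hxdef, h1, h2]
  have hFii : ∀ p q : ℝ, IntervalIntegrable F volume p q := by
    intro p q
    have hκii : IntervalIntegrable (fun t => κ (x t)) volume p q := by
      rw [hκx]
      exact step_ii (step_ii (fun _ _ => intervalIntegrable_const) r (κ m)) s (κ a) p q
    have hπ : Continuous (fun t : ℝ => -∫ u in (0:ℝ)..t, x u) :=
      (intervalIntegral.continuous_primitive hxii 0).neg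
    exact hκii.continuousOn_mul hπ.continuousOn
  -- compute the three pieces
  have hP1 : (∫ t in (0:ℝ)..s, F t) = (-(a * κ a)) * (s^2 - 0^2)/2 + 0 * (s - 0) := by
    apply int_linear_piece hs'
    intro t ht
    rw [hFdef]
    simp only
    rw [hI1 t (le_of_lt ht.1) ht.2, hA t ht.2]
    ring
  have hP2 : (∫ t in s..r, F t) = (-(m * κ m)) * (r^2 - s^2)/2
      + ((m * s - a * s) * κ m) * (r - s) := by
    apply int_linear_piece hsr'
    intro t ht
    rw [hFdef]
    simp only
    rw [hI2 t ht.1 ht.2, hM t ht.1 ht.2]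
    ring
  have hP3 : (∫ t in r..T, F t) = (-(b * κ b)) * (T^2 - r^2)/2
      + ((b * r - (a * s + m * (r - s))) * κ b) * (T - r) := by
    apply int_linear_piece hrT'
    intro t ht
    rw [hFdef]
    simp only
    rw [hI3 t ht.1, hB t ht.1]
    ring
  have hsplit : (∫ t in (0:ℝ)..T, F t) = (∫ t in (0:ℝ)..s, F t) + (∫ t in s..r, F t)
      + (∫ t in r..T, F t) := by
    rw [intervalIntegral.integral_add_adjacent_intervals (hFii 0 s) (hFii s r),
        intervalIntegral.integral_add_adjacent_intervals (hFii 0 r) (hFii r T)]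
  have hle := hNA x hpc hrt
  rw [show (∫ t in (0:ℝ)..T, (-∫ u in (0:ℝ)..t, x u) * κ (x t)) = ∫ t in (0:ℝ)..T, F t from rfl,
      hsplit, hP1, hP2, hP3] at hle
  nlinarith [hle, hzero]


/-- **No dynamic arbitrage implies linear price impact** (the converse direction of
Lemma 1 of the paper, in the deterministic form in which it is proved): if for
every piecewise-constant round-trip trading rate `x` on `[0, T]` the cumulative
price-impact gain `∫₀ᵀ π t · κ (x t) dt` (with `π t = -∫₀ᵗ x`) is nonpositive,
then `κ` is linear: `κ α = α · κ 1` for all `α`; in particular `κ` is odd and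
`κ 0 = 0`. -/
theorem stmt_2 (κ : ℝ → ℝ) (T : ℝ) (hT : 0 < T)
    (hNA : ∀ x : ℝ → ℝ, PiecewiseConstantOn x T →
      (∫ t in (0 : ℝ)..T, x t) = 0 →
      (∫ t in (0 : ℝ)..T, (-∫ u in (0 : ℝ)..t, x u) * κ (x t)) ≤ 0) :
    (∀ a : ℝ, κ a = a * κ 1) ∧ (∀ a : ℝ, κ (-a) = -κ a) ∧ κ 0 = 0 := by
  -- the fundamental inequality from a two-rate round trip
  have star : ∀ a u : ℝ, 0 < u → 0 ≤ a * (u * κ a + κ (-(u * a))) := by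
    intro a u hu
    have h1u : (0:ℝ) < 1 + u := by linarith
    set τ : ℝ := T / (1 + u) with hτdef
    have hτ : 0 < τ := by positivity
    have hTr : T - u * τ = τ := by
      rw [hτdef]; field_simp; ring
    have key := master κ T hNA a a (-(u * a)) (u * τ / 2) (u * τ)
      (by positivity) (by nlinarith) (by nlinarith)
      (by rw [hTr]; ring)
    rw [hTr] at key
    nlinarith [key, mul_pos hu (mul_pos hτ hτ), sq_nonneg τ]
  -- oddness away from zero
  have odd : ∀ a : ℝ, a ≠ 0 → κ (-a) = -κ a := by
    intro a ha
    have h1 := star a 1 one_pos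
    have h2 := star (-a) 1 one_pos
    simp only [one_mul, neg_neg] at h1 h2
    have hz : a * (κ a + κ (-a)) = 0 := by nlinarith [h1, h2]
    rcases mul_eq_zero.1 hz with h | h
    · exact absurd h ha
    · linarith
  have hm1 : κ (-1) = -κ 1 := odd 1 one_ne_zero
  -- linearity on positive reals
  have linpos : ∀ v : ℝ, 0 < v → κ v = v * κ 1 := by
    intro v hv
    -- upper bound
    have hub := star (-1) v hv
    have e1 : -(v * (-1:ℝ)) = v := by ring
    rw [e1, hm1] at hub
    -- lower bound
    have hlb := star v (1/v) (by positivity)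
    have e2 : -((1/v) * v) = (-1:ℝ) := by field_simp
    rw [e2, hm1] at hlb
    have e3 : v * (1/v * κ v + -κ 1) = κ v - v * κ 1 := by
      field_simp; ring
    rw [e3] at hlb
    linarith [hub, hlb]
  -- linearity on nonzero reals
  have linne : ∀ v : ℝ, v ≠ 0 → κ v = v * κ 1 := by
    intro v hv
    rcases lt_or_gt_of_ne hv with h | h
    · have := linpos (-v) (by linarith)
      have ho := odd v hv
      linarith [this, ho]
    · exact linpos v h
  -- κ 0 = 0
  have h0 : κ 0 = 0 := by
    have k1 := master κ T hNA 1 0 (-(1/2)) (T/4) (T/2)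
      (by positivity) (by linarith) (by linarith) (by ring)
    have k2 := master κ T hNA (-1) 0 (-(-1/2)) (T/4) (T/2)
      (by positivity) (by linarith) (by linarith) (by ring)
    have e1 : κ (-(1/2):ℝ) = -(1/2) * κ 1 := linne _ (by norm_num)
    have e2 : κ (-(-1/2):ℝ) = (1/2) * κ 1 := by norm_num; exact linne _ (by norm_num)
    have e3 : κ (1:ℝ) = 1 * κ 1 := linne 1 one_ne_zero
    have e4 : κ (-1:ℝ) = -1 * κ 1 := by rw [hm1]; ring
    rw [e1, e3] at k1
    rw [e2, e4] at k2
    nlinarith [k1, k2, sq_nonneg T, mul_pos hT hT]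
  refine ⟨?_, ?_, h0⟩
  · intro a
    rcases eq_or_ne a 0 with rfl | ha
    · simpa using h0
    · exact linne a ha
  · intro a
    rcases eq_or_ne a 0 with rfl | ha
    · rw [neg_zero, h0, neg_zero]
    · exact odd a ha
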